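/- If a ≥ s - 1 where n = as + b with 0 ≤ b ≤ s - 1 and a ≥ 2, then χ(F_n^s) = s + ⌈b/a⌉ ≤ s + 1. -/

import Mathlib

/-!
Upper bound: cut `0, …, n - 1` into `b` blocks of `s + 1` consecutive vertices followed by
`a - b` blocks of `s`, and colour each vertex by its offset in its block. Two vertices of the
same colour are then at least `s` apart, and since every block has at most `s + 1` elements and
`b ≤ a`, also at least `s` apart around the wrap-around. Lower bound: `{1, …, s}` is a clique,
and when `b > 0` an independent set consists of points pairwise at cyclic distance `≥ s`, hence
has at most `⌊n / s⌋ = a` elements, so `s` colour classes cover only `a s < n` vertices.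
-/

/-- Cyclic distance `min (|x-y|, n - |x-y|)` on `ℤ/nℤ` for `x, y ∈ {1,…,n}`. -/
def cdist (n x y : ℕ) : ℕ := min (max x y - min x y) (n - (max x y - min x y))

/-- The graph `F_n^s` on vertex set `[n] = {1,…,n}`: distinct `x, y` are adjacent
iff their cyclic distance is `< s`. -/
def Fgraph (n s : ℕ) : SimpleGraph ℕ :=
  SimpleGraph.fromRel (fun x y => x ∈ Finset.Icc 1 n ∧ y ∈ Finset.Icc 1 n ∧ cdist n x y < s)

open Finset SimpleGraph

lemma cdist_comm (n x y : ℕ) : cdist n x y = cdist n y x := by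
  simp only [cdist, max_comm, min_comm]

lemma cdist_of_le {n x y : ℕ} (h : x ≤ y) : cdist n x y = min (y - x) (n - (y - x)) := by
  rw [cdist, max_eq_right h, min_eq_left h]

lemma Fgraph_adj_iff {n s x y : ℕ} :
    (Fgraph n s).Adj x y ↔ x ≠ y ∧ x ∈ Icc 1 n ∧ y ∈ Icc 1 n ∧ cdist n x y < s := by
  refine ⟨?_, fun ⟨hne, hx, hy, hd⟩ ↦ ⟨hne, .inl ⟨hx, hy, hd⟩⟩⟩
  rintro ⟨hne, ⟨hx, hy, hd⟩ | ⟨hy, hx, hd⟩⟩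
  · exact ⟨hne, hx, hy, hd⟩
  · exact ⟨hne, hx, hy, cdist_comm n x y ▸ hd⟩

lemma Fgraph_adj_of_lt {n s x y : ℕ} (h : x < y) :
    (Fgraph n s).Adj x y ↔ 1 ≤ x ∧ y ≤ n ∧ (y - x < s ∨ n - (y - x) < s) := by
  rw [Fgraph_adj_iff, cdist_of_le h.le, min_lt_iff, mem_Icc, mem_Icc]
  omega

lemma Fgraph_isClique_Icc {n s : ℕ} (hsn : s ≤ n) : (Fgraph n s).IsClique (Icc 1 s : Set ℕ) := by
  intro x hx y hy hne
  simp only [coe_Icc, Set.mem_Icc] at hx hy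
  rcases lt_or_gt_of_ne hne with h | h
  · rw [Fgraph_adj_of_lt h]; omega
  · rw [adj_comm, Fgraph_adj_of_lt h]; omega

lemma Nat.add_le_of_lt_of_mod_eq {m x y : ℕ} (hxy : x < y) (h : x % m = y % m) : x + m ≤ y := by
  have := Nat.le_of_dvd (Nat.sub_pos_of_lt hxy) ((Nat.modEq_iff_dvd' hxy.le).mp h)
  omega

lemma Nat.add_le_mul_add_mod {m k x : ℕ} (h : x < m * k) : x + m ≤ m * k + x % m := by
  have hm : 0 < m := Nat.pos_of_ne_zero (by rintro rfl; simp at h)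
  have hq : x / m < k := (Nat.div_lt_iff_lt_mul hm).2 (by rwa [mul_comm])
  have := Nat.mul_le_mul_left m hq
  rw [Nat.mul_add_one] at this
  have := Nat.div_add_mod x m
  omega

/-- Colour of `z`: its offset in its block, where `0, 1, 2, …` is cut into `b` blocks of
`s + 1` consecutive numbers followed by blocks of `s`. -/
def blockColor (s b z : ℕ) : ℕ :=
  if z < (s + 1) * b then z % (s + 1) else (z - (s + 1) * b) % s

section blockColor

variable {s b : ℕ}

lemma blockColor_le (z : ℕ) : blockColor s b z ≤ z := by
  unfold blockColor
  split_ifs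
  · exact Nat.mod_le _ _
  · exact (Nat.mod_le _ _).trans (Nat.sub_le _ _)

lemma blockColor_lt_succ (hs : 0 < s) (z : ℕ) : blockColor s b z < s + 1 := by
  unfold blockColor
  split_ifs
  · exact Nat.mod_lt _ (Nat.succ_pos s)
  · exact (Nat.mod_lt _ hs).trans (Nat.lt_succ_self s)

lemma blockColor_zero_lt (hs : 0 < s) (z : ℕ) : blockColor s 0 z < s := by
  simp only [blockColor, mul_zero, Nat.not_lt_zero, if_false, Nat.sub_zero]
  exact Nat.mod_lt _ hs

lemma add_le_of_blockColor_eq {z₁ z₂ : ℕ} (h : z₁ < z₂)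
    (hc : blockColor s b z₁ = blockColor s b z₂) : z₁ + s ≤ z₂ := by
  unfold blockColor at hc
  split_ifs at hc with h₁ h₂ h₂
  · have := Nat.add_le_of_lt_of_mod_eq h hc
    omega
  · have := Nat.add_le_mul_add_mod h₁
    have := Nat.mod_le (z₂ - (s + 1) * b) s
    omega
  · omega
  · have := Nat.add_le_of_lt_of_mod_eq (by omega : z₁ - (s + 1) * b < z₂ - (s + 1) * b) hc
    omega

lemma add_le_add_blockColor {a z : ℕ} (hba : b ≤ a) (hz : z < a * s + b) :
    z + s ≤ a * s + b + blockColor s b z := by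
  have hbs : b * s ≤ a * s := Nat.mul_le_mul_right s hba
  have hblocks : (s + 1) * b = b * s + b := by ring
  unfold blockColor
  split_ifs with h
  · have := Nat.add_le_mul_add_mod h
    omega
  · have hrest : s * (a - b) = a * s - b * s := by rw [Nat.mul_sub, mul_comm s a, mul_comm s b]
    have := Nat.add_le_mul_add_mod (m := s) (k := a - b) (x := z - (s + 1) * b) (by omega)
    omega

end blockColor

lemma Fgraph_colorable {s a b k : ℕ} (hba : b ≤ a) (hk : ∀ z, blockColor s b z < k) :
    (Fgraph (a * s + b) s).Colorable k := by
  have key : ∀ x y, x < y → (Fgraph (a * s + b) s).Adj x y →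
      blockColor s b (x - 1) ≠ blockColor s b (y - 1) := by
    intro x y hxy hadj hc
    rw [Fgraph_adj_of_lt hxy] at hadj
    have := add_le_of_blockColor_eq (by omega) hc
    have := add_le_add_blockColor (s := s) (z := y - 1) hba (by omega)
    have := blockColor_le (s := s) (b := b) (x - 1)
    omega
  refine ⟨Coloring.mk (fun x ↦ ⟨blockColor s b (x - 1), hk _⟩) fun {v w} hadj hc ↦ ?_⟩
  rcases lt_or_gt_of_ne hadj.ne with h | h
  · exact key v w h hadj (Fin.mk.inj hc)
  · exact key w v h hadj.symm (Fin.mk.inj hc).symm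

/-- Points on a cycle of length `n` at pairwise cyclic distance at least `s`. -/
lemma Finset.card_le_div_of_cyclic_separated {I : Finset ℕ} {n s : ℕ} (hs : 0 < s)
    (hsn : s ≤ n) (hI : ∀ x ∈ I, ∀ y ∈ I, x < y → x + s ≤ y ∧ y + s ≤ x + n) :
    #I ≤ n / s := by
  rcases I.eq_empty_or_nonempty with rfl | hne
  · simp
  set m := I.min' hne
  have hspan : ∀ x ∈ I, m ≤ x ∧ x - m + s ≤ n := fun x hx ↦ by
    have hmx := I.min'_le x hx
    rcases hmx.eq_or_lt with h | h
    · omega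
    · have := (hI m (I.min'_mem hne) x hx h).2
      omega
  have hmono : StrictMonoOn (fun x ↦ (x - m) / s) I := fun x hx y hy hxy ↦ by
    have hstep : x - m + s ≤ y - m := by
      have := (hspan x hx).1
      have := (hI x hx y hy hxy).1
      omega
    have := Nat.div_le_div_right (c := s) hstep
    rwa [Nat.add_div_right _ hs] at this
  have hmaps : ∀ x ∈ I, (x - m) / s ∈ range (n / s) := fun x hx ↦ by
    rw [mem_range, Nat.lt_iff_add_one_le, ← Nat.add_div_right _ hs]
    exact Nat.div_le_div_right (hspan x hx).2
  simpa using card_le_card_of_injOn _ hmaps hmono.injOn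

lemma Fgraph_card_le_div_of_isIndepSet {n s : ℕ} (hs : 0 < s) (hsn : s ≤ n) {I : Finset ℕ}
    (hIn : I ⊆ Icc 1 n) (hI : (Fgraph n s).IsIndepSet I) : #I ≤ n / s := by
  refine card_le_div_of_cyclic_separated hs hsn fun x hx y hy hxy ↦ ?_
  have hnadj : ¬(Fgraph n s).Adj x y := hI hx hy hxy.ne
  have := mem_Icc.1 (hIn hx)
  have := mem_Icc.1 (hIn hy)
  rw [Fgraph_adj_of_lt hxy] at hnadj
  omega

lemma Fgraph_le_mul_div_of_colorable {n s k : ℕ} (hs : 0 < s) (hsn : s ≤ n)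
    (h : (Fgraph n s).Colorable k) : n ≤ n / s * k := by
  obtain ⟨C⟩ := h
  calc n = #(Icc 1 n) := by simp
    _ ≤ n / s * #((Icc 1 n).image C) := card_le_mul_card_image _ _ fun c _ ↦
        Fgraph_card_le_div_of_isIndepSet hs hsn (filter_subset _ _) fun x hx y hy _ ↦
          C.not_adj_of_mem_colorClass (mem_filter.1 hx).2 (mem_filter.1 hy).2
    _ ≤ n / s * k := Nat.mul_le_mul_left _ ((card_le_univ _).trans_eq (Fintype.card_fin k))

theorem stmt_12_general (s a b n : ℕ) (hs : 2 ≤ s) (has : s - 1 ≤ a)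
    (hb : b ≤ s - 1) (hn : n = a * s + b) :
    (Fgraph n s).chromaticNumber = ((s + (b + a - 1) / a : ℕ) : ℕ∞) ∧
    s + (b + a - 1) / a ≤ s + 1 := by
  subst hn
  have hs0 : 0 < s := by omega
  have hba : b ≤ a := by omega
  have hsn : s ≤ a * s + b := le_add_right (Nat.le_mul_of_pos_left s (by omega))
  rcases Nat.eq_zero_or_pos b with rfl | hb0
  · rw [Nat.div_eq_of_lt (by omega : 0 + a - 1 < a)]
    refine ⟨le_antisymm (Fgraph_colorable hba (blockColor_zero_lt hs0)).chromaticNumber_le ?_,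
      by omega⟩
    simpa using (Fgraph_isClique_Icc hsn).card_le_chromaticNumber
  · rw [Nat.div_eq_of_lt_le (k := 1) (by omega) (by omega)]
    refine ⟨?_, le_rfl⟩
    push_cast
    refine chromaticNumber_eq_iff_colorable_not_colorable.2
      ⟨Fgraph_colorable hba (blockColor_lt_succ hs0), fun hcol ↦ ?_⟩
    have := Fgraph_le_mul_div_of_colorable hs0 hsn hcol
    rw [add_comm, Nat.add_mul_div_right _ _ hs0, Nat.div_eq_of_lt (by omega), zero_add] at this
    omega

/-- If `a ≥ s - 1` (with `a ≥ 2`, `0 ≤ b ≤ s - 1`, `n = a*s + b`, `s ≥ 2`),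
then `χ(F_n^s) = s + ⌈b/a⌉ ≤ s + 1`. -/
theorem stmt_12 (s a b n : ℕ) (hs : 2 ≤ s) (ha : 2 ≤ a) (has : s - 1 ≤ a)
    (hb : b ≤ s - 1) (hn : n = a * s + b) :
    (Fgraph n s).chromaticNumber = ((s + (b + a - 1) / a : ℕ) : ℕ∞) ∧
    s + (b + a - 1) / a ≤ s + 1 :=
  stmt_12_general s a b n hs has hb hn
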